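/- arXiv:2012.09147 — 8 statements merged into one kernel-verified Lean document; each statement's English description precedes it below -/
import Mathlib

section
/- In the threshold model, UNIFORM is an optimal audit policy: for every audit policy φ (any map sending each profile A' of n reports to a vector φ(A') ∈ [0,1]^n with ∑_{i ∈ G(A')} φ_i(A') ≤ B), the incentive to lie satisfies ε(UNIFORM) ≤ ε(φ). -/
/-!
Threshold allocation model: `n` agents with types in `X × Z` (`X` verifiable,
`Z` self-reported), types drawn i.i.d. from a pmf `h`, score `f`, threshold `θ`,
audit budget `B`, penalty `c`.
-/

open Finset
open scoped Classical

noncomputable section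

variable {X Z : Type*} [Fintype X] [Fintype Z] [Nonempty X] [Nonempty Z]

/-- `h` is a probability mass function on `X × Z`. -/
def IsPmf (h : X × Z → ℝ) : Prop :=
  (∀ a, 0 ≤ h a) ∧ ∑ a : X × Z, h a = 1

/-- The `n`-agent profile obtained from the profile `am` of the agents other
than `i` by inserting `a` in slot `i` (denoted `A₋ᵢ ∪ᵢ {a}` in the paper). -/
def ins {n : ℕ} (i : Fin n) (am : {j : Fin n // j ≠ i} → X × Z) (a : X × Z) :
    Fin n → X × Z :=
  fun j => if hj : j = i then a else am ⟨j, hj⟩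

/-- A report `a' = (x, z')` is suspicious: it has positive probability, scores at
or above the threshold, and some positive-probability type with the same `x`
scores below the threshold. -/
def Suspicious (h f : X × Z → ℝ) (θ : ℝ) (a : X × Z) : Prop :=
  0 < h a ∧ θ ≤ f a ∧ ∃ z : Z, 0 < h (a.1, z) ∧ f (a.1, z) < θ

/-- `G A` is the set of indices of suspicious reports in the profile `A`. -/
def G {n : ℕ} (h f : X × Z → ℝ) (θ : ℝ) (A : Fin n → X × Z) : Finset (Fin n) :=
  univ.filter fun i => Suspicious h f θ (A i)

/-- An audit policy assigns to each profile a vector in `[0,1]^n` whose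
suspicious coordinates sum to at most the budget `B`. -/
def IsAuditPolicy {n : ℕ} (h f : X × Z → ℝ) (θ B : ℝ)
    (φ : (Fin n → X × Z) → Fin n → ℝ) : Prop :=
  ∀ A : Fin n → X × Z,
    (∀ i, φ A i ∈ Set.Icc (0 : ℝ) 1) ∧ ∑ i ∈ G h f θ A, φ A i ≤ B

/-- Expected gain of agent `i` with true type `a` reporting `a'` (when the others
report their true types, drawn i.i.d. from `h`), under audit policy `φ`. -/
def gain {n : ℕ} (h f : X × Z → ℝ) (θ c : ℝ)
    (φ : (Fin n → X × Z) → Fin n → ℝ) (i : Fin n) (a a' : X × Z) : ℝ :=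
  if a' = a then 0
  else
    (∑ am : {j : Fin n // j ≠ i} → X × Z,
        (∏ j, h (am j)) *
          ((if θ ≤ f a' then (1 : ℝ) else 0) * (1 - φ (ins i am a') i)
            - c * φ (ins i am a') i))
      - (if θ ≤ f a then (1 : ℝ) else 0)

/-- The incentive to lie under policy `φ`: the largest expected gain of any
misreport `a' = (x, z')` by any agent `i` with any true type `a = (x, z)` of
positive probability. -/
def eps {n : ℕ} (h f : X × Z → ℝ) (θ c : ℝ)
    (φ : (Fin n → X × Z) → Fin n → ℝ) : ℝ :=
  sSup {g : ℝ | ∃ (i : Fin n) (a : X × Z) (z' : Z),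
    0 < h a ∧ g = gain h f θ c φ i a (a.1, z')}

/-- The UNIFORM audit policy: audit each suspicious report with probability
`min 1 (B / |G(A)|)`, each sure-lie (`h (A i) = 0`) with probability `1`, and
everyone else with probability `0`. -/
def uniformPolicy {n : ℕ} (h f : X × Z → ℝ) (θ B : ℝ) :
    (Fin n → X × Z) → Fin n → ℝ :=
  fun A i =>
    if Suspicious h f θ (A i) then min 1 (B / ((G h f θ A).card : ℝ))
    else if h (A i) = 0 then 1 else 0


/-! ### Auxiliary definitions and lemmas -/

section Aux
set_option linter.unusedSectionVars false
set_option maxHeartbeats 1000000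

variable {n : ℕ}

/-- Product weight of a partial/full profile. -/
def pr (h : X × Z → ℝ) {J : Type*} [Fintype J] (am : J → X × Z) : ℝ := ∏ j, h (am j)

lemma pr_nonneg {h : X × Z → ℝ} (h0 : ∀ a, 0 ≤ h a) {J : Type*} [Fintype J]
    (am : J → X × Z) : 0 ≤ pr h am :=
  Finset.prod_nonneg fun _ _ => h0 _

lemma sum_pr {h : X × Z → ℝ} (hpmf : IsPmf h) (J : Type*) [Fintype J] [DecidableEq J] :
    ∑ am : J → X × Z, pr h am = 1 := by
  unfold pr
  rw [← Fintype.piFinset_univ, ← Finset.prod_univ_sum]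
  simp [hpmf.2]

/-- Number of suspicious coordinates of a partial profile. -/
def scnt (h f : X × Z → ℝ) (θ : ℝ) {J : Type*} [Fintype J] (am : J → X × Z) : ℕ :=
  (univ.filter fun j => Suspicious h f θ (am j)).card

/-- Expected uniform audit probability faced by a suspicious report in slot `i`. -/
def uval (h f : X × Z → ℝ) (θ B : ℝ) (i : Fin n) : ℝ :=
  ∑ am : {j : Fin n // j ≠ i} → X × Z,
    pr h am * min 1 (B / (1 + (scnt h f θ am : ℝ)))

lemma ins_same {i : Fin n} (am : {j : Fin n // j ≠ i} → X × Z) (a : X × Z) :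
    ins i am a i = a := by simp [ins]

lemma ins_ne {i : Fin n} (am : {j : Fin n // j ≠ i} → X × Z) (a : X × Z)
    {j : Fin n} (hj : j ≠ i) : ins i am a j = am ⟨j, hj⟩ := by simp [ins, hj]

lemma sum_split (i : Fin n) (F : (Fin n → X × Z) → ℝ) :
    ∑ A : Fin n → X × Z, F A
      = ∑ a : X × Z, ∑ am : {j : Fin n // j ≠ i} → X × Z, F (ins i am a) := by
  rw [← Equiv.sum_comp (Equiv.funSplitAt i (X × Z)).symm F, Fintype.sum_prod_type]
  refine Finset.sum_congr rfl fun a _ => Finset.sum_congr rfl fun am _ => ?_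
  congr 1
  funext j
  by_cases hj : j = i <;> simp [Equiv.funSplitAt, Equiv.piSplitAt, ins, hj]

lemma sum_split_index {M : Type*} [AddCommMonoid M] (i : Fin n) (g : Fin n → M) :
    ∑ j, g j = g i + ∑ j : {j : Fin n // j ≠ i}, g j := by
  rw [Fintype.sum_eq_add_sum_compl i, Finset.sum_subtype (p := fun j => j ≠ i) ({i}ᶜ : Finset (Fin n)) (by simp) g]

lemma prod_split_index (i : Fin n) (g : Fin n → ℝ) :
    ∏ j, g j = g i * ∏ j : {j : Fin n // j ≠ i}, g j := by
  rw [Fintype.prod_eq_mul_prod_compl i, Finset.prod_subtype (p := fun j => j ≠ i) ({i}ᶜ : Finset (Fin n)) (by simp) g]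

lemma pr_ins (h : X × Z → ℝ) (i : Fin n) (am : {j : Fin n // j ≠ i} → X × Z)
    (a : X × Z) : pr h (ins i am a) = h a * pr h am := by
  unfold pr
  rw [prod_split_index i, ins_same]
  congr 1
  exact Fintype.prod_congr _ _ fun j => by rw [ins_ne am a j.2]

lemma mem_G {h f : X × Z → ℝ} {θ : ℝ} {A : Fin n → X × Z} {i : Fin n} :
    i ∈ G h f θ A ↔ Suspicious h f θ (A i) := by simp [G]

lemma G_card_ins (h f : X × Z → ℝ) (θ : ℝ) (i : Fin n)
    (am : {j : Fin n // j ≠ i} → X × Z) (a : X × Z) :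
    (G h f θ (ins i am a)).card
      = (if Suspicious h f θ a then 1 else 0) + scnt h f θ am := by
  unfold G scnt
  rw [Finset.card_filter, Finset.card_filter, sum_split_index i, ins_same]
  congr 1
  exact Fintype.sum_congr _ _ fun j => by rw [ins_ne am a j.2]

lemma uniform_mem {h f : X × Z → ℝ} {θ B : ℝ} (hB : 0 ≤ B) (A : Fin n → X × Z)
    (i : Fin n) : uniformPolicy h f θ B A i ∈ Set.Icc (0 : ℝ) 1 := by
  unfold uniformPolicy
  split_ifs with h1 h2
  · constructor
    · exact le_min zero_le_one (div_nonneg hB (Nat.cast_nonneg _))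
    · exact min_le_left _ _
  · exact ⟨zero_le_one, le_refl 1⟩
  · exact ⟨le_refl 0, zero_le_one⟩

lemma gain_le_one {h f : X × Z → ℝ} {θ c : ℝ}
    (hpmf : IsPmf h) (hc : 0 ≤ c) (φ : (Fin n → X × Z) → Fin n → ℝ)
    (hmem : ∀ A i, φ A i ∈ Set.Icc (0 : ℝ) 1) (i : Fin n) (a a' : X × Z) :
    gain h f θ c φ i a a' ≤ 1 := by
  unfold gain
  split
  · norm_num
  · have hb : (∑ am : {j : Fin n // j ≠ i} → X × Z,
        (∏ j, h (am j)) *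
          ((if θ ≤ f a' then (1 : ℝ) else 0) * (1 - φ (ins i am a') i)
            - c * φ (ins i am a') i)) ≤ 1 := by
      calc (∑ am : {j : Fin n // j ≠ i} → X × Z,
          (∏ j, h (am j)) *
            ((if θ ≤ f a' then (1 : ℝ) else 0) * (1 - φ (ins i am a') i)
              - c * φ (ins i am a') i))
          ≤ ∑ am : {j : Fin n // j ≠ i} → X × Z, pr h am * 1 := by
            refine Finset.sum_le_sum fun am _ => ?_
            refine mul_le_mul_of_nonneg_left ?_ (pr_nonneg hpmf.1 am)
            have h1 := (hmem (ins i am a') i).1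
            have h2 := (hmem (ins i am a') i).2
            split_ifs <;> nlinarith
        _ = 1 := by
            simp only [mul_one]
            exact sum_pr hpmf {j : Fin n // j ≠ i}
    have : (0:ℝ) ≤ (if θ ≤ f a then (1 : ℝ) else 0) := by positivity
    linarith

lemma eps_bddAbove {h f : X × Z → ℝ} {θ c : ℝ}
    (hpmf : IsPmf h) (hc : 0 ≤ c) (φ : (Fin n → X × Z) → Fin n → ℝ)
    (hmem : ∀ A i, φ A i ∈ Set.Icc (0 : ℝ) 1) :
    BddAbove {g : ℝ | ∃ (i : Fin n) (a : X × Z) (z' : Z),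
      0 < h a ∧ g = gain h f θ c φ i a (a.1, z')} := by
  refine ⟨1, fun g hg => ?_⟩
  obtain ⟨i, a, z', _, rfl⟩ := hg
  exact gain_le_one hpmf hc φ hmem i a _

lemma exists_pos {h : X × Z → ℝ} (hpmf : IsPmf h) : ∃ a : X × Z, 0 < h a := by
  by_contra hcon
  push_neg at hcon
  have : ∑ a : X × Z, h a = 0 :=
    le_antisymm (Finset.sum_nonpos fun a _ => hcon a) (Finset.sum_nonneg fun a _ => hpmf.1 a)
  rw [hpmf.2] at this
  norm_num at this

lemma eps_nonneg {h f : X × Z → ℝ} {θ c : ℝ} (hn : 1 ≤ n)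
    (hpmf : IsPmf h) (hc : 0 ≤ c) (φ : (Fin n → X × Z) → Fin n → ℝ)
    (hmem : ∀ A i, φ A i ∈ Set.Icc (0 : ℝ) 1) :
    0 ≤ eps h f θ c φ := by
  obtain ⟨a, ha⟩ := exists_pos hpmf
  have h0 : (0:ℝ) ∈ {g : ℝ | ∃ (i : Fin n) (a : X × Z) (z' : Z),
      0 < h a ∧ g = gain h f θ c φ i a (a.1, z')} := by
    refine ⟨⟨0, hn⟩, a, a.2, ha, ?_⟩
    rw [show (a.1, a.2) = a from rfl]
    unfold gain
    rw [if_pos rfl]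
  exact le_csSup (eps_bddAbove hpmf hc φ hmem) h0

/-- Expected audit probability faced by a report `a'` in slot `i` under policy `φ`. -/
def epol (h : X × Z → ℝ) (φ : (Fin n → X × Z) → Fin n → ℝ) (i : Fin n)
    (a' : X × Z) : ℝ :=
  ∑ am : {j : Fin n // j ≠ i} → X × Z, pr h am * φ (ins i am a') i

lemma uval_nonneg {h f : X × Z → ℝ} {θ B : ℝ} (h0 : ∀ a, 0 ≤ h a) (hB : 0 ≤ B)
    (i : Fin n) : 0 ≤ uval h f θ B i := by
  refine Finset.sum_nonneg fun am _ => mul_nonneg (pr_nonneg h0 am) ?_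
  refine le_min zero_le_one (div_nonneg hB ?_)
  positivity

lemma uval_eq (h f : X × Z → ℝ) (θ B : ℝ) (i i' : Fin n) :
    uval h f θ B i = uval h f θ B i' := by
  have e : {j : Fin n // j ≠ i} ≃ {j : Fin n // j ≠ i'} :=
    (Equiv.swap i i').subtypeEquiv fun j => not_iff_not.mpr
      ⟨fun hj => by rw [hj, Equiv.swap_apply_left],
       fun hj => (Equiv.swap i i').injective (by rw [hj, Equiv.swap_apply_left])⟩
  unfold uval
  refine Fintype.sum_equiv (Equiv.arrowCongr e (Equiv.refl (X × Z))) _ _ fun am => ?_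
  have hfun : (Equiv.arrowCongr e (Equiv.refl (X × Z))) am = fun j' => am (e.symm j') := rfl
  have h1 : pr h (fun j' => am (e.symm j')) = pr h am := by
    unfold pr
    exact Equiv.prod_comp e.symm (fun j => h (am j))
  have h2 : scnt h f θ (fun j' => am (e.symm j')) = scnt h f θ am := by
    unfold scnt
    rw [Finset.card_filter, Finset.card_filter]
    exact Equiv.sum_comp e.symm (fun j => if Suspicious h f θ (am j) then 1 else 0)
  rw [hfun, h1, h2]

lemma exchange (h f : X × Z → ℝ) (θ : ℝ) (i : Fin n) (r : (Fin n → X × Z) → ℝ) :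
    ∑ A : Fin n → X × Z, pr h A * (if Suspicious h f θ (A i) then r A else 0)
      = ∑ a' ∈ univ.filter (Suspicious h f θ),
          h a' * ∑ am : {j : Fin n // j ≠ i} → X × Z, pr h am * r (ins i am a') := by
  rw [sum_split i (fun A => pr h A * (if Suspicious h f θ (A i) then r A else 0)),
    Finset.sum_filter]
  refine Fintype.sum_congr _ _ fun a' => ?_
  by_cases hs : Suspicious h f θ a'
  · simp only [ins_same, hs, if_true, pr_ins, Finset.mul_sum]
    exact Fintype.sum_congr _ _ fun am => by ring
  · simp [ins_same, hs]

lemma uniform_epol {h f : X × Z → ℝ} {θ B : ℝ} {a' : X × Z}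
    (hs : Suspicious h f θ a') (i : Fin n) :
    ∑ am : {j : Fin n // j ≠ i} → X × Z,
        pr h am * uniformPolicy h f θ B (ins i am a') i = uval h f θ B i := by
  refine Fintype.sum_congr _ _ fun am => ?_
  congr 1
  unfold uniformPolicy
  rw [ins_same, if_pos hs, G_card_ins, if_pos hs]
  push_cast
  ring_nf

lemma point {h f : X × Z → ℝ} {θ B : ℝ} {φ : (Fin n → X × Z) → Fin n → ℝ}
    (hB : 0 ≤ B) (hφ : IsAuditPolicy h f θ B φ) (A : Fin n → X × Z) :
    ∑ i ∈ G h f θ A, φ A i ≤ ∑ i ∈ G h f θ A, uniformPolicy h f θ B A i := by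
  have huni : ∀ i ∈ G h f θ A,
      uniformPolicy h f θ B A i = min 1 (B / ((G h f θ A).card : ℝ)) := by
    intro i hi
    unfold uniformPolicy
    rw [if_pos (mem_G.mp hi)]
  rw [Finset.sum_congr rfl huni, Finset.sum_const, nsmul_eq_mul]
  rcases Nat.eq_zero_or_pos (G h f θ A).card with hg | hg
  · rw [Finset.card_eq_zero] at hg
    simp [hg]
  · have hgpos : (0:ℝ) < ((G h f θ A).card : ℝ) := by exact_mod_cast hg
    rcases le_total (1:ℝ) (B / ((G h f θ A).card : ℝ)) with hm | hm
    · rw [min_eq_left hm]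
      calc ∑ i ∈ G h f θ A, φ A i ≤ ∑ _i ∈ G h f θ A, (1:ℝ) :=
            Finset.sum_le_sum fun i _ => ((hφ A).1 i).2
        _ = ((G h f θ A).card : ℝ) * 1 := by rw [Finset.sum_const, nsmul_eq_mul]
    · rw [min_eq_right hm, mul_div_cancel₀ _ (ne_of_gt hgpos)]
      exact (hφ A).2

lemma key {h f : X × Z → ℝ} {θ B : ℝ} {φ : (Fin n → X × Z) → Fin n → ℝ}
    (hpmf : IsPmf h) (hB : 0 ≤ B) (hφ : IsAuditPolicy h f θ B φ) :
    ∑ i : Fin n, ∑ a' ∈ univ.filter (Suspicious h f θ), h a' * epol h φ i a'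
      ≤ ∑ i : Fin n, ∑ a' ∈ univ.filter (Suspicious h f θ), h a' * uval h f θ B i := by
  have hL : ∀ i : Fin n, ∑ a' ∈ univ.filter (Suspicious h f θ), h a' * epol h φ i a'
      = ∑ A : Fin n → X × Z, pr h A * (if Suspicious h f θ (A i) then φ A i else 0) :=
    fun i => (exchange h f θ i (fun A => φ A i)).symm
  have hR : ∀ i : Fin n, ∑ a' ∈ univ.filter (Suspicious h f θ), h a' * uval h f θ B i
      = ∑ A : Fin n → X × Z,
          pr h A * (if Suspicious h f θ (A i) then uniformPolicy h f θ B A i else 0) := by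
    intro i
    rw [exchange h f θ i (fun A => uniformPolicy h f θ B A i)]
    refine Finset.sum_congr rfl fun a' ha' => ?_
    rw [uniform_epol (Finset.mem_filter.mp ha').2 i]
  simp only [hL, hR]
  rw [Finset.sum_comm, Finset.sum_comm (γ := Fin n)]
  refine Finset.sum_le_sum fun A _ => ?_
  have hGφ : ∑ i : Fin n, (if Suspicious h f θ (A i) then φ A i else 0)
      = ∑ i ∈ G h f θ A, φ A i := (Finset.sum_filter _ _).symm
  have hGu : ∑ i : Fin n, (if Suspicious h f θ (A i) then uniformPolicy h f θ B A i else 0)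
      = ∑ i ∈ G h f θ A, uniformPolicy h f θ B A i := (Finset.sum_filter _ _).symm
  rw [← Finset.mul_sum, ← Finset.mul_sum, hGφ, hGu]
  exact mul_le_mul_of_nonneg_left (point hB hφ A) (pr_nonneg hpmf.1 A)

lemma main_bound {h f : X × Z → ℝ} {θ B c : ℝ} {φ : (Fin n → X × Z) → Fin n → ℝ}
    (hn : 1 ≤ n) (hpmf : IsPmf h) (hB : 0 ≤ B) (hc : 0 ≤ c)
    (hφ : IsAuditPolicy h f θ B φ) {asusp : X × Z} (hsusp : Suspicious h f θ asusp)
    (i : Fin n) :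
    1 - (1 + c) * uval h f θ B i ≤ eps h f θ c φ := by
  classical
  set S := univ.filter (Suspicious h f θ) with hS
  have hSne : S.Nonempty := ⟨asusp, by simp [hS, hsusp]⟩
  have hmem : ∀ A i, φ A i ∈ Set.Icc (0:ℝ) 1 := fun A i => (hφ A).1 i
  have hex : ∃ (i₀ : Fin n) (a₀ : X × Z), a₀ ∈ S ∧ epol h φ i₀ a₀ ≤ uval h f θ B i₀ := by
    by_contra hcon
    push_neg at hcon
    have hstrict : ∑ i : Fin n, ∑ a' ∈ S, h a' * uval h f θ B i
        < ∑ i : Fin n, ∑ a' ∈ S, h a' * epol h φ i a' := by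
      have : Nonempty (Fin n) := ⟨⟨0, hn⟩⟩
      refine Finset.sum_lt_sum_of_nonempty Finset.univ_nonempty fun i _ => ?_
      refine Finset.sum_lt_sum_of_nonempty hSne fun a' ha' => ?_
      have hpos : 0 < h a' := ((Finset.mem_filter.mp ha').2).1
      exact mul_lt_mul_of_pos_left (hcon i a' ha') hpos
    exact absurd (key hpmf hB hφ) (not_le.mpr hstrict)
  obtain ⟨i₀, a₀, ha₀S, hle⟩ := hex
  have hs₀ : Suspicious h f θ a₀ := (Finset.mem_filter.mp ha₀S).2
  obtain ⟨hpos₀, hθ₀, z', hz'pos, hz'lt⟩ := hs₀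
  set at0 : X × Z := (a₀.1, z') with hat0
  have hrep : (at0.1, a₀.2) = a₀ := rfl
  have hne : (at0.1, a₀.2) ≠ at0 := by
    rw [hrep]
    intro hcontra
    rw [hcontra] at hθ₀
    exact absurd hz'lt (not_lt.mpr hθ₀)
  have hgain : gain h f θ c φ i₀ at0 (at0.1, a₀.2) = 1 - (1 + c) * epol h φ i₀ a₀ := by
    unfold gain
    rw [if_neg hne, hrep, if_pos hθ₀, if_neg (not_le.mpr hz'lt), sub_zero]
    have hsum : ∑ am : {j : Fin n // j ≠ i₀} → X × Z,
        (∏ j, h (am j)) * ((1:ℝ) * (1 - φ (ins i₀ am a₀) i₀) - c * φ (ins i₀ am a₀) i₀)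
        = (∑ am : {j : Fin n // j ≠ i₀} → X × Z, pr h am)
          - (1 + c) * ∑ am : {j : Fin n // j ≠ i₀} → X × Z,
              pr h am * φ (ins i₀ am a₀) i₀ := by
      rw [Finset.mul_sum, ← Finset.sum_sub_distrib]
      exact Fintype.sum_congr _ _ fun am => by unfold pr; ring
    rw [hsum, sum_pr hpmf {j : Fin n // j ≠ i₀}]
    rfl
  have hin : gain h f θ c φ i₀ at0 (at0.1, a₀.2) ∈ {g : ℝ | ∃ (i : Fin n) (a : X × Z)
      (z' : Z), 0 < h a ∧ g = gain h f θ c φ i a (a.1, z')} :=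
    ⟨i₀, at0, a₀.2, hz'pos, rfl⟩
  have h1 : 1 - (1 + c) * uval h f θ B i₀ ≤ gain h f θ c φ i₀ at0 (at0.1, a₀.2) := by
    rw [hgain]
    have := mul_le_mul_of_nonneg_left hle (by linarith : (0:ℝ) ≤ 1 + c)
    linarith
  have h2 : gain h f θ c φ i₀ at0 (at0.1, a₀.2) ≤ eps h f θ c φ :=
    le_csSup (eps_bddAbove hpmf hc φ hmem) hin
  rw [uval_eq h f θ B i i₀]
  linarith

end Aux

/-- in the threshold model, UNIFORM is an optimal audit policy:
its incentive to lie is at most that of any audit policy `φ`. -/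
theorem uniform_optimal {n : ℕ} (hn : 1 ≤ n)
    (h f : X × Z → ℝ) (θ B c : ℝ)
    (hpmf : IsPmf h) (hB : 0 ≤ B) (hc : 0 ≤ c)
    (φ : (Fin n → X × Z) → Fin n → ℝ) (hφ : IsAuditPolicy h f θ B φ) :
    eps h f θ c (uniformPolicy (n := n) h f θ B) ≤ eps h f θ c φ := by
  classical
  have hmem : ∀ A i, φ A i ∈ Set.Icc (0:ℝ) 1 := fun A i => (hφ A).1 i
  have hepsφ : 0 ≤ eps h f θ c φ := eps_nonneg hn hpmf hc φ hmem
  refine Real.sSup_le ?_ hepsφ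
  rintro g ⟨i, a, z', ha, rfl⟩
  set a' : X × Z := (a.1, z') with ha'
  by_cases heq : a' = a
  · rw [show gain h f θ c (uniformPolicy (n := n) h f θ B) i a a'
        = 0 from by unfold gain; rw [if_pos heq]]
    exact hepsφ
  unfold gain
  rw [if_neg heq]
  set U := uniformPolicy (n := n) h f θ B with hU
  have hUmem : ∀ A j, U A j ∈ Set.Icc (0:ℝ) 1 := fun A j => uniform_mem hB A j
  have hind : (0:ℝ) ≤ (if θ ≤ f a then (1:ℝ) else 0) := by positivity
  by_cases hfa' : θ ≤ f a'
  · by_cases hza' : h a' = 0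
    · -- sure lie: audited with probability 1
      have hsum : ∑ am : {j : Fin n // j ≠ i} → X × Z,
          (∏ j, h (am j)) * ((if θ ≤ f a' then (1:ℝ) else 0) * (1 - U (ins i am a') i)
            - c * U (ins i am a') i) ≤ 0 := by
        refine Finset.sum_nonpos fun am _ => ?_
        have hU1 : U (ins i am a') i = 1 := by
          rw [hU]
          unfold uniformPolicy
          rw [ins_same, if_neg (fun hsusp => by
            exact absurd hsusp.1 (by rw [hza']; exact lt_irrefl 0)), if_pos hza']
        rw [hU1, if_pos hfa']
        have : (1:ℝ) * (1 - 1) - c * 1 = -c := by ring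
        rw [this]
        exact mul_nonpos_of_nonneg_of_nonpos (pr_nonneg hpmf.1 am) (by linarith)
      linarith
    · have hpa' : 0 < h a' := lt_of_le_of_ne (hpmf.1 a') (Ne.symm hza')
      by_cases hsusp : Suspicious h f θ a'
      · -- suspicious report: uniform audits with probability min 1 (B/(1+scnt))
        have hsum : ∑ am : {j : Fin n // j ≠ i} → X × Z,
            (∏ j, h (am j)) * ((if θ ≤ f a' then (1:ℝ) else 0) * (1 - U (ins i am a') i)
              - c * U (ins i am a') i) = 1 - (1 + c) * uval h f θ B i := by
          have hUval : ∀ am : {j : Fin n // j ≠ i} → X × Z,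
              U (ins i am a') i = min 1 (B / (1 + (scnt h f θ am : ℝ))) := by
            intro am
            rw [hU]
            unfold uniformPolicy
            rw [ins_same, if_pos hsusp, G_card_ins, if_pos hsusp]
            push_cast
            ring_nf
          have hsum2 : ∑ am : {j : Fin n // j ≠ i} → X × Z,
              (∏ j, h (am j)) * ((if θ ≤ f a' then (1:ℝ) else 0) * (1 - U (ins i am a') i)
                - c * U (ins i am a') i)
              = (∑ am : {j : Fin n // j ≠ i} → X × Z, pr h am)
                - (1 + c) * ∑ am : {j : Fin n // j ≠ i} → X × Z,
                    pr h am * min 1 (B / (1 + (scnt h f θ am : ℝ))) := by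
            rw [Finset.mul_sum, ← Finset.sum_sub_distrib]
            refine Fintype.sum_congr _ _ fun am => ?_
            rw [hUval am, if_pos hfa']
            unfold pr
            ring
          rw [hsum2, sum_pr hpmf {j : Fin n // j ≠ i}]
          rfl
        rw [hsum]
        by_cases hfa : θ ≤ f a
        · rw [if_pos hfa]
          have h1 : 0 ≤ uval h f θ B i := uval_nonneg hpmf.1 hB i
          have h2 : 0 ≤ (1 + c) * uval h f θ B i :=
            mul_nonneg (by linarith) h1
          linarith
        · rw [if_neg hfa, sub_zero]
          exact main_bound hn hpmf hB hc hφ hsusp i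
      · -- not suspicious, positive probability: never audited, but then θ ≤ f a
        have hfa : θ ≤ f a := by
          by_contra hlt
          exact hsusp ⟨hpa', hfa', a.2, ha, not_le.mp hlt⟩
        have hU0 : ∀ am : {j : Fin n // j ≠ i} → X × Z, U (ins i am a') i = 0 := by
          intro am
          rw [hU]
          unfold uniformPolicy
          rw [ins_same, if_neg hsusp, if_neg hza']
        have hsum : ∑ am : {j : Fin n // j ≠ i} → X × Z,
            (∏ j, h (am j)) * ((if θ ≤ f a' then (1:ℝ) else 0) * (1 - U (ins i am a') i)
              - c * U (ins i am a') i) = 1 := by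
          have : ∀ am : {j : Fin n // j ≠ i} → X × Z,
              (∏ j, h (am j)) * ((if θ ≤ f a' then (1:ℝ) else 0) * (1 - U (ins i am a') i)
                - c * U (ins i am a') i) = pr h am := by
            intro am
            rw [hU0 am, if_pos hfa']
            unfold pr
            ring
          rw [Fintype.sum_congr _ _ this, sum_pr hpmf {j : Fin n // j ≠ i}]
        rw [hsum, if_pos hfa]
        simpa using hepsφ
  · -- report below threshold: gain is nonpositive
    have hsum : ∑ am : {j : Fin n // j ≠ i} → X × Z,
        (∏ j, h (am j)) * ((if θ ≤ f a' then (1:ℝ) else 0) * (1 - U (ins i am a') i)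
          - c * U (ins i am a') i) ≤ 0 := by
      refine Finset.sum_nonpos fun am _ => ?_
      have h1 := (hUmem (ins i am a') i).1
      rw [if_neg hfa']
      have : (0:ℝ) * (1 - U (ins i am a') i) - c * U (ins i am a') i
          = -(c * U (ins i am a') i) := by ring
      rw [this]
      exact mul_nonpos_of_nonneg_of_nonpos (pr_nonneg hpmf.1 am)
        (neg_nonpos.mpr (mul_nonneg hc h1))
    linarith

end
end

section
/- For every audit policy φ, ∑_{i=1}^{n} ∑_{a' suspicious} h(a') · E_{A_{−i} ~ h^{n−1}}[ φ_i(A_{−i} ∪_i {a'}) ] ≤ E_{A ~ h^{n}}[ min(B, |G(A)|) ], and this inequality holds with equality when φ is the UNIFORM policy. -/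
/-!
Threshold allocation model: `n` agents with types in `X × Z` (`X` verifiable,
`Z` self-reported), types drawn i.i.d. from a pmf `h`, score `f`, threshold `θ`,
audit budget `B`, penalty `c`.
-/

open Finset
open scoped Classical

noncomputable section

variable {X Z : Type*} [Fintype X] [Fintype Z] [Nonempty X] [Nonempty Z]

/-!
Reindexing `(a', A₋ᵢ) ↦ A₋ᵢ ∪ᵢ {a'}` turns agent `i`'s term into `E_{A ~ hⁿ}[φ_i(A) · 1{i ∈ G(A)}]`,
so the left-hand side is `E[∑_{i ∈ G(A)} φ_i(A)]`. Profile by profile this sum is at most `B` (the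
budget) and at most `|G(A)|` (each `φ_i ≤ 1`), and the uniform policy, which gives every
suspicious report `min(1, B/|G(A)|)`, attains `min(B, |G(A)|)` exactly.
-/

theorem Fintype.sum_mul_sum_funSplitAt_symm {α ι R : Type*} [Fintype α] [Fintype ι]
    [DecidableEq ι] [CommSemiring R] (w : α → R) (i : ι) (g : (ι → α) → R) :
    ∑ a, w a * ∑ am : {j // j ≠ i} → α,
        (∏ j, w (am j)) * g ((Equiv.funSplitAt i α).symm (a, am))
      = ∑ A, (∏ j, w (A j)) * g A := by
  rw [← (Equiv.funSplitAt i α).symm.sum_comp, Fintype.sum_prod_type]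
  refine Finset.sum_congr rfl fun a _ => ?_
  rw [Finset.mul_sum]
  refine Finset.sum_congr rfl fun am _ => ?_
  have hsplit : ∏ j, w ((Equiv.funSplitAt i α).symm (a, am) j) = w a * ∏ j, w (am j) := by
    rw [Fintype.prod_eq_mul_prod_subtype_ne _ i]
    congr 1
    · simp
    · exact Finset.prod_congr rfl fun j _ => by simp [j.2]
  rw [hsplit, mul_assoc]

theorem natCast_mul_min_one_div {B : ℝ} (hB : 0 ≤ B) (k : ℕ) :
    k * min 1 (B / k) = min B k := by
  rcases k.eq_zero_or_pos with rfl | hk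
  · simp [hB]
  · have hk' : (0 : ℝ) < k := Nat.cast_pos.mpr hk
    rw [mul_min_of_nonneg _ _ hk'.le, mul_one, mul_div_cancel₀ _ hk'.ne', min_comm]

section

omit [Fintype X] [Fintype Z] [Nonempty X] [Nonempty Z]

theorem ins_eq_funSplitAt_symm {n : ℕ} (i : Fin n) (am : {j : Fin n // j ≠ i} → X × Z)
    (a : X × Z) : ins i am a = (Equiv.funSplitAt i (X × Z)).symm (a, am) := by
  funext j
  by_cases hj : j = i <;> simp [ins, hj]

theorem ins_apply_self {n : ℕ} (i : Fin n) (am : {j : Fin n // j ≠ i} → X × Z) (a : X × Z) :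
    ins i am a i = a := by
  simp [ins]

theorem IsAuditPolicy.sum_le_min {n : ℕ} {h f : X × Z → ℝ} {θ B : ℝ}
    {φ : (Fin n → X × Z) → Fin n → ℝ} (hφ : IsAuditPolicy h f θ B φ) (A : Fin n → X × Z) :
    ∑ i ∈ G h f θ A, φ A i ≤ min B ((G h f θ A).card : ℝ) := by
  refine le_min (hφ A).2 ?_
  simpa using Finset.sum_le_card_nsmul _ _ 1 fun i _ => ((hφ A).1 i).2

theorem sum_uniformPolicy {n : ℕ} (h f : X × Z → ℝ) (θ : ℝ) {B : ℝ} (hB : 0 ≤ B)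
    (A : Fin n → X × Z) :
    ∑ i ∈ G h f θ A, uniformPolicy h f θ B A i = min B ((G h f θ A).card : ℝ) := by
  have hconst : ∀ i ∈ G h f θ A, uniformPolicy h f θ B A i = min 1 (B / (G h f θ A).card) :=
    fun i hi => if_pos (Finset.mem_filter.mp hi).2
  rw [Finset.sum_congr rfl hconst, Finset.sum_const, nsmul_eq_mul, natCast_mul_min_one_div hB]

end

section

omit [Nonempty X] [Nonempty Z]

theorem sum_filter_mul_sum_ins (h : X × Z → ℝ) (p : X × Z → Prop) {n : ℕ} (i : Fin n)
    (q : (Fin n → X × Z) → ℝ) :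
    ∑ a' ∈ univ.filter p, h a' * ∑ am : {j : Fin n // j ≠ i} → X × Z,
        (∏ j, h (am j)) * q (ins i am a')
      = ∑ A, (∏ j, h (A j)) * if p (A i) then q A else 0 := by
  rw [← Fintype.sum_mul_sum_funSplitAt_symm h i, Finset.sum_filter]
  refine Finset.sum_congr rfl fun a _ => ?_
  simp only [← ins_eq_funSplitAt_symm, ins_apply_self]
  split_ifs <;> simp

theorem sum_sum_suspicious_mul_sum_ins {n : ℕ} (h f : X × Z → ℝ) (θ : ℝ)
    (q : (Fin n → X × Z) → Fin n → ℝ) :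
    ∑ i : Fin n, ∑ a' ∈ univ.filter (Suspicious h f θ),
        h a' * ∑ am : {j : Fin n // j ≠ i} → X × Z, (∏ j, h (am j)) * q (ins i am a') i
      = ∑ A : Fin n → X × Z, (∏ j, h (A j)) * ∑ i ∈ G h f θ A, q A i := by
  rw [Finset.sum_congr rfl fun i _ => sum_filter_mul_sum_ins h _ i (q · i), Finset.sum_comm]
  simp_rw [← Finset.mul_sum, G, Finset.sum_filter]

end

/-- for every audit policy, the total probability-weighted expected
audit mass over suspicious reports is at most `E_{A ~ hⁿ}[min(B, |G(A)|)]`, with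
equality for the UNIFORM policy. -/
theorem total_expected_audit_le {n : ℕ}
    (h f : X × Z → ℝ) (θ B : ℝ) (hpmf : IsPmf h) (hB : 0 ≤ B) :
    (∀ φ : (Fin n → X × Z) → Fin n → ℝ, IsAuditPolicy h f θ B φ →
      ∑ i : Fin n, ∑ a' ∈ univ.filter (Suspicious h f θ),
          h a' * ∑ am : {j : Fin n // j ≠ i} → X × Z,
            (∏ j, h (am j)) * φ (ins i am a') i
        ≤ ∑ A : Fin n → X × Z,
            (∏ j, h (A j)) * min B ((G h f θ A).card : ℝ)) ∧
    (∑ i : Fin n, ∑ a' ∈ univ.filter (Suspicious h f θ),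
        h a' * ∑ am : {j : Fin n // j ≠ i} → X × Z,
          (∏ j, h (am j)) * uniformPolicy h f θ B (ins i am a') i
      = ∑ A : Fin n → X × Z,
          (∏ j, h (A j)) * min B ((G h f θ A).card : ℝ)) := by
  refine ⟨fun φ hφ => ?_, ?_⟩
  · rw [sum_sum_suspicious_mul_sum_ins]
    gcongr with A
    · exact Finset.prod_nonneg fun j _ => hpmf.1 (A j)
    · exact hφ.sum_le_min A
  · simp_rw [sum_sum_suspicious_mul_sum_ins, sum_uniformPolicy h f θ hB]

end
end

section
/- Suppose at least one suspicious type exists. Then for every audit policy φ there exist an agent i and a suspicious report a' such that E_{A_{−i} ~ h^{n−1}}[ φ_i(A_{−i} ∪_i {a'}) ] ≤ ∑_{A_{−i} ∈ (X×Z)^{n−1}} min(1, B/(|G(A_{−i})| + 1)) · ∏_{j ≠ i} h(a_j), i.e., the expected audit probability of some suspicious report under φ is at most its value under the UNIFORM policy. -/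
/-!
Threshold allocation model: `n` agents with types in `X × Z` (`X` verifiable,
`Z` self-reported), types drawn i.i.d. from a pmf `h`, score `f`, threshold `θ`,
audit budget `B`, penalty `c`.
-/

open Finset
open scoped Classical

noncomputable section

variable {X Z : Type*} [Fintype X] [Fintype Z] [Nonempty X] [Nonempty Z]

private lemma ins_symm_eq {n : ℕ} (i : Fin n) (am : {j : Fin n // j ≠ i} → X × Z)
    (a : X × Z) : (Equiv.funSplitAt i (X × Z)).symm (a, am) = ins i am a := by
  funext j
  by_cases hj : j = i <;> simp [Equiv.funSplitAt, Equiv.piSplitAt, ins, hj]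

private lemma prod_ins {n : ℕ} (h : X × Z → ℝ) (i : Fin n)
    (am : {j : Fin n // j ≠ i} → X × Z) (a : X × Z) :
    ∏ j, h (ins i am a j) = h a * ∏ j, h (am j) := by
  rw [← Finset.mul_prod_erase univ _ (mem_univ i)]
  congr 1
  · simp [ins]
  · rw [Finset.prod_subtype (p := fun j => j ≠ i) (univ.erase i) (by simp)
      (fun j => h (ins i am a j))]
    refine Fintype.prod_congr _ _ fun j => ?_
    simp [ins, j.prop]

private lemma card_G_ins {n : ℕ} (h f : X × Z → ℝ) (θ : ℝ) (i : Fin n)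
    (am : {j : Fin n // j ≠ i} → X × Z) (a : X × Z) (ha : Suspicious h f θ a) :
    (G h f θ (ins i am a)).card
      = (univ.filter fun j : {j : Fin n // j ≠ i} => Suspicious h f θ (am j)).card + 1 := by
  have hiG : i ∈ G h f θ (ins i am a) := by simp [G, ins, ha]
  rw [← Finset.card_erase_add_one hiG]
  congr 1
  refine (Finset.card_bij (fun (j : {j : Fin n // j ≠ i}) _ => j.val) ?_ ?_ ?_).symm
  · intro j hj
    rw [Finset.mem_filter] at hj
    rw [Finset.mem_erase]
    refine ⟨j.prop, ?_⟩
    simp [G, ins, j.prop, hj.2]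
  · intro j₁ _ j₂ _ hval
    exact Subtype.ext hval
  · intro b hb
    rw [Finset.mem_erase] at hb
    refine ⟨⟨b, hb.1⟩, ?_, rfl⟩
    have := hb.2
    simp only [G, Finset.mem_filter, Finset.mem_univ, true_and] at this ⊢
    simpa [ins, hb.1] using this

private lemma sum_ins {n : ℕ} (h : X × Z → ℝ) (i : Fin n) (F : (Fin n → X × Z) → ℝ) :
    ∑ a : X × Z, ∑ am : {j : Fin n // j ≠ i} → X × Z,
      h a * ((∏ j, h (am j)) * F (ins i am a))
    = ∑ A : Fin n → X × Z, (∏ j, h (A j)) * F A := by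
  have key : ∀ A : Fin n → X × Z, ins i (fun j => A j.val) (A i) = A := fun A =>
    (ins_symm_eq i (fun j => A j.val) (A i)).symm.trans
      ((Equiv.funSplitAt i (X × Z)).symm_apply_apply A)
  calc ∑ a : X × Z, ∑ am : {j : Fin n // j ≠ i} → X × Z,
        h a * ((∏ j, h (am j)) * F (ins i am a))
      = ∑ p : (X × Z) × ({j : Fin n // j ≠ i} → X × Z),
          h p.1 * ((∏ j, h (p.2 j)) * F (ins i p.2 p.1)) :=
        (Fintype.sum_prod_type (f := fun p : (X × Z) × ({j : Fin n // j ≠ i} → X × Z) =>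
          h p.1 * ((∏ j, h (p.2 j)) * F (ins i p.2 p.1)))).symm
    _ = ∑ A : Fin n → X × Z, (∏ j, h (A j)) * F A := by
        refine (Fintype.sum_equiv (Equiv.funSplitAt i (X × Z)) _ _ fun A => ?_).symm
        have hp := prod_ins h i (fun j => A j.val) (A i)
        rw [key A] at hp
        simp only [Equiv.funSplitAt_apply]
        rw [key A, hp]
        ring

private lemma pointwise_le {n : ℕ} (h f : X × Z → ℝ) (θ B : ℝ) (hB : 0 ≤ B)
    (φ : (Fin n → X × Z) → Fin n → ℝ) (hφ : IsAuditPolicy h f θ B φ)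
    (A : Fin n → X × Z) :
    ∑ i ∈ G h f θ A, φ A i ≤ ∑ i ∈ G h f θ A, min 1 (B / ((G h f θ A).card : ℝ)) := by
  rcases Finset.eq_empty_or_nonempty (G h f θ A) with hs | hs
  · simp [hs]
  · have hcard : (0:ℝ) < ((G h f θ A).card : ℝ) := by
      exact_mod_cast Finset.card_pos.mpr hs
    rw [Finset.sum_const, nsmul_eq_mul]
    have hmin : ((G h f θ A).card : ℝ) * min 1 (B / ((G h f θ A).card : ℝ))
        = min ((G h f θ A).card : ℝ) B := by
      rw [mul_min_of_nonneg _ _ hcard.le, mul_one, mul_div_cancel₀ _ (ne_of_gt hcard)]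
    rw [hmin]
    refine le_min ?_ (hφ A).2
    calc ∑ i ∈ G h f θ A, φ A i ≤ ∑ _i ∈ G h f θ A, (1:ℝ) :=
          Finset.sum_le_sum fun i _ => ((hφ A).1 i).2
      _ = ((G h f θ A).card : ℝ) := by simp

/-- if some suspicious type exists, then for every audit policy `φ`
some agent `i` and suspicious report `a'` receive expected audit probability at
most its value under the UNIFORM policy. -/
theorem exists_suspicious_expected_audit_le_uniform {n : ℕ} (hn : 1 ≤ n)
    (h f : X × Z → ℝ) (θ B : ℝ) (hpmf : IsPmf h) (hB : 0 ≤ B)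
    (hex : ∃ a : X × Z, Suspicious h f θ a)
    (φ : (Fin n → X × Z) → Fin n → ℝ) (hφ : IsAuditPolicy h f θ B φ) :
    ∃ (i : Fin n) (a' : X × Z), Suspicious h f θ a' ∧
      ∑ am : {j : Fin n // j ≠ i} → X × Z,
          (∏ j, h (am j)) * φ (ins i am a') i ≤
        ∑ am : {j : Fin n // j ≠ i} → X × Z,
          min 1 (B / (((univ.filter fun j : {j : Fin n // j ≠ i} =>
              Suspicious h f θ (am j)).card : ℝ) + 1)) *
            ∏ j, h (am j) := by
  by_contra hcon
  push_neg at hcon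
  obtain ⟨a₀, ha₀⟩ := hex
  haveI : NeZero n := ⟨by omega⟩
  set S : Finset (X × Z) := univ.filter (Suspicious h f θ) with hS
  have hSne : S.Nonempty := ⟨a₀, by simp [hS, ha₀]⟩
  set Lf : Fin n → X × Z → ℝ := fun i a' =>
    ∑ am : {j : Fin n // j ≠ i} → X × Z, (∏ j, h (am j)) * φ (ins i am a') i with hLf
  set Rf : Fin n → X × Z → ℝ := fun i a' =>
    ∑ am : {j : Fin n // j ≠ i} → X × Z,
      min 1 (B / (((univ.filter fun j : {j : Fin n // j ≠ i} =>
        Suspicious h f θ (am j)).card : ℝ) + 1)) * ∏ j, h (am j) with hRf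
  have hlt : ∑ i : Fin n, ∑ a' ∈ S, h a' * Rf i a'
      < ∑ i : Fin n, ∑ a' ∈ S, h a' * Lf i a' := by
    refine Finset.sum_lt_sum_of_nonempty univ_nonempty fun i _ => ?_
    refine Finset.sum_lt_sum_of_nonempty hSne fun a' ha' => ?_
    have hsusp : Suspicious h f θ a' := (Finset.mem_filter.mp ha').2
    exact mul_lt_mul_of_pos_left (hcon i a' hsusp) hsusp.1
  have hL : ∀ i : Fin n, ∑ a' ∈ S, h a' * Lf i a'
      = ∑ A : Fin n → X × Z, (∏ j, h (A j)) *
          (if Suspicious h f θ (A i) then φ A i else 0) := by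
    intro i
    rw [← sum_ins h i (fun A => if Suspicious h f θ (A i) then φ A i else 0),
      hS, Finset.sum_filter]
    refine Finset.sum_congr rfl fun a' _ => ?_
    by_cases hsusp : Suspicious h f θ a'
    · rw [if_pos hsusp, hLf, Finset.mul_sum]
      refine Finset.sum_congr rfl fun am _ => ?_
      have h1 : ins i am a' i = a' := by simp [ins]
      rw [h1, if_pos hsusp]
    · rw [if_neg hsusp]
      have h1 : ∀ am : {j : Fin n // j ≠ i} → X × Z, ins i am a' i = a' := by
        intro am; simp [ins]
      simp [h1, hsusp]
  have hR : ∀ i : Fin n, ∑ a' ∈ S, h a' * Rf i a'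
      = ∑ A : Fin n → X × Z, (∏ j, h (A j)) *
          (if Suspicious h f θ (A i)
            then min 1 (B / ((G h f θ A).card : ℝ)) else 0) := by
    intro i
    rw [← sum_ins h i (fun A => if Suspicious h f θ (A i)
        then min 1 (B / ((G h f θ A).card : ℝ)) else 0),
      hS, Finset.sum_filter]
    refine Finset.sum_congr rfl fun a' _ => ?_
    by_cases hsusp : Suspicious h f θ a'
    · rw [if_pos hsusp, hRf, Finset.mul_sum]
      refine Finset.sum_congr rfl fun am _ => ?_
      have h1 : ins i am a' i = a' := by simp [ins]
      rw [h1, if_pos hsusp, card_G_ins h f θ i am a' hsusp]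
      push_cast
      ring
    · rw [if_neg hsusp]
      have h1 : ∀ am : {j : Fin n // j ≠ i} → X × Z, ins i am a' i = a' := by
        intro am; simp [ins]
      simp [h1, hsusp]
  have hle : ∑ i : Fin n, ∑ a' ∈ S, h a' * Lf i a'
      ≤ ∑ i : Fin n, ∑ a' ∈ S, h a' * Rf i a' := by
    calc ∑ i : Fin n, ∑ a' ∈ S, h a' * Lf i a'
        = ∑ i : Fin n, ∑ A : Fin n → X × Z, (∏ j, h (A j)) *
            (if Suspicious h f θ (A i) then φ A i else 0) :=
          Finset.sum_congr rfl fun i _ => hL i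
      _ = ∑ A : Fin n → X × Z, ∑ i : Fin n, (∏ j, h (A j)) *
            (if Suspicious h f θ (A i) then φ A i else 0) := Finset.sum_comm
      _ ≤ ∑ A : Fin n → X × Z, ∑ i : Fin n, (∏ j, h (A j)) *
            (if Suspicious h f θ (A i)
              then min 1 (B / ((G h f θ A).card : ℝ)) else 0) := by
          refine Finset.sum_le_sum fun A _ => ?_
          have hprod : 0 ≤ ∏ j, h (A j) := Finset.prod_nonneg fun j _ => hpmf.1 _
          rw [← Finset.mul_sum, ← Finset.mul_sum]
          refine mul_le_mul_of_nonneg_left ?_ hprod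
          rw [← Finset.sum_filter, ← Finset.sum_filter]
          exact pointwise_le h f θ B hB φ hφ A
      _ = ∑ i : Fin n, ∑ A : Fin n → X × Z, (∏ j, h (A j)) *
            (if Suspicious h f θ (A i)
              then min 1 (B / ((G h f θ A).card : ℝ)) else 0) := Finset.sum_comm
      _ = ∑ i : Fin n, ∑ a' ∈ S, h a' * Rf i a' :=
          (Finset.sum_congr rfl fun i _ => (hR i).symm)
  exact absurd hle (not_le.mpr hlt)


end
end

section
/- Fix x ∈ X such that {z : h(x, z) > 0} is nonempty, let z* minimize f(x, ·) over {z : h(x, z) > 0}, and set a* = (x, z*) (the minimum type of x). Then for every audit policy φ, every report a' = (x, z'), and every true type a = (x, z) with h(a) > 0, the expected gain satisfies g_φ(a, a') ≤ max(0, g_φ(a*, a')). -/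
/-!
Threshold allocation model: `n` agents with types in `X × Z` (`X` verifiable,
`Z` self-reported), types drawn i.i.d. from a pmf `h`, score `f`, threshold `θ`,
audit budget `B`, penalty `c`.
-/

open Finset
open scoped Classical

noncomputable section

variable {X Z : Type*} [Fintype X] [Fintype Z] [Nonempty X] [Nonempty Z]

/-- if `z*` minimizes `f (x, ·)` over positive-probability types,
i.e. `a* = (x, z*)` is the minimum type of `x`, then for every audit policy,
agent, report `a' = (x, z')`, and positive-probability true type `a = (x, z)`,
the expected gain satisfies `g_φ(a, a') ≤ max 0 (g_φ(a*, a'))`. -/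
theorem gain_le_max_gain_min_type {n : ℕ}
    (h f : X × Z → ℝ) (θ B c : ℝ) (hpmf : IsPmf h) (hc : 0 ≤ c)
    (φ : (Fin n → X × Z) → Fin n → ℝ) (hφ : IsAuditPolicy h f θ B φ)
    (i : Fin n) (x : X) (zs : Z)
    (hzs : 0 < h (x, zs))
    (hmin : ∀ z : Z, 0 < h (x, z) → f (x, zs) ≤ f (x, z))
    (z z' : Z) (hz : 0 < h (x, z)) :
    gain h f θ c φ i (x, z) (x, z') ≤
      max 0 (gain h f θ c φ i (x, zs) (x, z')) := by
  have hfs : f (x, zs) ≤ f (x, z) := hmin z hz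
  have hsum : ∑ am : {j : Fin n // j ≠ i} → X × Z, ∏ j, h (am j) = 1 := by
    calc ∑ am : {j : Fin n // j ≠ i} → X × Z, ∏ j, h (am j)
        = ∑ am ∈ Fintype.piFinset
            (fun _ : {j : Fin n // j ≠ i} => (univ : Finset (X × Z))),
            ∏ j, h (am j) := by rw [Fintype.piFinset_univ]
      _ = ∏ _j : {j : Fin n // j ≠ i}, ∑ a : X × Z, h a :=
            (Finset.prod_univ_sum _ _).symm
      _ = 1 := by simp [hpmf.2]
  by_cases he : (x, z') = (x, z)
  · rw [gain, if_pos he]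
    exact le_max_of_le_left le_rfl
  by_cases hes : (x, z') = (x, zs)
  · have h2 : gain h f θ c φ i (x, zs) (x, z') = 0 := by rw [gain, if_pos hes]
    rw [h2, max_self, gain, if_neg he]
    have hf' : f (x, z') = f (x, zs) := by rw [hes]
    by_cases ht : θ ≤ f (x, z')
    · have htz : θ ≤ f (x, z) := le_trans (hf' ▸ ht) hfs
      rw [if_pos htz]
      have hbd : ∀ am : {j : Fin n // j ≠ i} → X × Z,
          (∏ j, h (am j)) *
            ((if θ ≤ f (x, z') then (1:ℝ) else 0) * (1 - φ (ins i am (x, z')) i)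
              - c * φ (ins i am (x, z')) i) ≤ ∏ j, h (am j) := by
        intro am
        rw [if_pos ht]
        have hp : 0 ≤ ∏ j, h (am j) := Finset.prod_nonneg fun j _ => hpmf.1 _
        have hφ1 := (hφ (ins i am (x, z'))).1 i
        have h0 := hφ1.1
        have h1 := hφ1.2
        nlinarith [mul_nonneg hp h0, mul_nonneg hp (mul_nonneg hc h0)]
      have hS : (∑ am : {j : Fin n // j ≠ i} → X × Z,
          (∏ j, h (am j)) *
            ((if θ ≤ f (x, z') then (1:ℝ) else 0) * (1 - φ (ins i am (x, z')) i)
              - c * φ (ins i am (x, z')) i))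
          ≤ ∑ am : {j : Fin n // j ≠ i} → X × Z, ∏ j, h (am j) :=
        Finset.sum_le_sum fun am _ => hbd am
      rw [hsum] at hS
      linarith
    · have hbd : ∀ am : {j : Fin n // j ≠ i} → X × Z,
          (∏ j, h (am j)) *
            ((if θ ≤ f (x, z') then (1:ℝ) else 0) * (1 - φ (ins i am (x, z')) i)
              - c * φ (ins i am (x, z')) i) ≤ 0 := by
        intro am
        rw [if_neg ht]
        have hp : 0 ≤ ∏ j, h (am j) := Finset.prod_nonneg fun j _ => hpmf.1 _
        have hφ1 := (hφ (ins i am (x, z'))).1 i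
        have h0 := hφ1.1
        nlinarith [mul_nonneg hp (mul_nonneg hc h0)]
      have hS : (∑ am : {j : Fin n // j ≠ i} → X × Z,
          (∏ j, h (am j)) *
            ((if θ ≤ f (x, z') then (1:ℝ) else 0) * (1 - φ (ins i am (x, z')) i)
              - c * φ (ins i am (x, z')) i)) ≤ 0 := by
        have hS' : (∑ am : {j : Fin n // j ≠ i} → X × Z,
            (∏ j, h (am j)) *
              ((if θ ≤ f (x, z') then (1:ℝ) else 0) * (1 - φ (ins i am (x, z')) i)
                - c * φ (ins i am (x, z')) i))
            ≤ ∑ _am : {j : Fin n // j ≠ i} → X × Z, (0:ℝ) :=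
          Finset.sum_le_sum fun am _ => hbd am
        simpa using hS'
      have hind : (0:ℝ) ≤ if θ ≤ f (x, z) then (1:ℝ) else 0 := by positivity
      linarith
  · rw [gain, if_neg he, gain, if_neg hes]
    have hind : (if θ ≤ f (x, zs) then (1:ℝ) else 0) ≤
        (if θ ≤ f (x, z) then (1:ℝ) else 0) := by
      by_cases hts : θ ≤ f (x, zs)
      · rw [if_pos hts, if_pos (le_trans hts hfs)]
      · rw [if_neg hts]; positivity
    have : (∑ am : {j : Fin n // j ≠ i} → X × Z,
          (∏ j, h (am j)) *
            ((if θ ≤ f (x, z') then (1:ℝ) else 0) * (1 - φ (ins i am (x, z')) i)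
              - c * φ (ins i am (x, z')) i))
        - (if θ ≤ f (x, z) then (1:ℝ) else 0)
        ≤ (∑ am : {j : Fin n // j ≠ i} → X × Z,
          (∏ j, h (am j)) *
            ((if θ ≤ f (x, z') then (1:ℝ) else 0) * (1 - φ (ins i am (x, z')) i)
              - c * φ (ins i am (x, z')) i))
        - (if θ ≤ f (x, zs) then (1:ℝ) else 0) := by linarith
    exact le_max_of_le_right this

end
end

section
/- In the top-k model: (i) ε(φ) ≥ 0 for every audit policy φ (since the truthful report yields gain 0); (ii) ε(UNIFORM-K) ≤ max(0, 1 − (1 + c) · min(1, B/k)); and consequently (iii) for every audit policy φ, ε(UNIFORM-K) − ε(φ) ≤ max(0, 1 − (1 + c) · min(1, B/k)). -/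
/-!
Top-`k` allocation model: `n` agents with types in `X × Z` (`X` verifiable, `Z`
self-reported), types drawn i.i.d. from a pmf `h`, score `f`; the `k` agents
with the highest scores (ties broken by agent index) are allocated a resource.
Audit budget `B`, penalty `c` for a detected misreport.
-/

open Finset
open scoped Classical

noncomputable section

variable {X Z : Type*} [Fintype X] [Fintype Z] [Nonempty X] [Nonempty Z]

/-- `Tk f k A` is the set of the `k` agents with the highest scores under the
reports `A`, ties broken in favour of the smaller agent index: agent `i` is
allocated iff fewer than `k` agents beat it (higher score, or equal score and
smaller index). -/
def Tk {n : ℕ} (f : X × Z → ℝ) (k : ℕ) (A : Fin n → X × Z) : Finset (Fin n) :=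
  univ.filter fun i =>
    (univ.filter fun j =>
      f (A i) < f (A j) ∨ (f (A j) = f (A i) ∧ j < i)).card < k

/-- An audit policy in the top-`k` model: a vector in `[0,1]^n` for each profile
whose top-`k` coordinates sum to at most the budget `B`. -/
def IsAuditPolicyK {n : ℕ} (f : X × Z → ℝ) (k : ℕ) (B : ℝ)
    (φ : (Fin n → X × Z) → Fin n → ℝ) : Prop :=
  ∀ A : Fin n → X × Z,
    (∀ i, φ A i ∈ Set.Icc (0 : ℝ) 1) ∧ ∑ i ∈ Tk f k A, φ A i ≤ B

/-- The UNIFORM-K audit policy: audit each of the top-`k` agents with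
probability `min 1 (B / k)`, and no one else. -/
def uniformK {n : ℕ} (f : X × Z → ℝ) (k : ℕ) (B : ℝ) :
    (Fin n → X × Z) → Fin n → ℝ :=
  fun A i => if i ∈ Tk f k A then min 1 (B / (k : ℝ)) else 0

/-- Expected gain of agent `i` with true type `a` reporting `a'` in the top-`k`
model (the other agents report their true types, drawn i.i.d. from `h`), under
audit policy `φ`. -/
def gainK {n : ℕ} (h f : X × Z → ℝ) (k : ℕ) (c : ℝ)
    (φ : (Fin n → X × Z) → Fin n → ℝ) (i : Fin n) (a a' : X × Z) : ℝ :=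
  if a' = a then 0
  else
    (∑ am : {j : Fin n // j ≠ i} → X × Z,
        (∏ j, h (am j)) *
          ((if i ∈ Tk f k (ins i am a') then (1 : ℝ) else 0) *
              (1 - φ (ins i am a') i)
            - c * φ (ins i am a') i))
      - ∑ am : {j : Fin n // j ≠ i} → X × Z,
          (∏ j, h (am j)) * (if i ∈ Tk f k (ins i am a) then (1 : ℝ) else 0)

/-- The (Bayesian) incentive to lie under policy `φ` in the top-`k` model. -/
def epsK {n : ℕ} (h f : X × Z → ℝ) (k : ℕ) (c : ℝ)
    (φ : (Fin n → X × Z) → Fin n → ℝ) : ℝ :=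
  sSup {g : ℝ | ∃ (i : Fin n) (a : X × Z) (z' : Z),
    0 < h a ∧ g = gainK h f k c φ i a (a.1, z')}

/-- Deterministic (dominant-strategy) gain of agent `i` with true type `a`
reporting `a'` when the other agents' reports are fixed to `am`. -/
def gainD {n : ℕ} (f : X × Z → ℝ) (k : ℕ) (c : ℝ)
    (φ : (Fin n → X × Z) → Fin n → ℝ) (i : Fin n)
    (am : {j : Fin n // j ≠ i} → X × Z) (a a' : X × Z) : ℝ :=
  if a' = a then 0
  else
    (if i ∈ Tk f k (ins i am a') then (1 : ℝ) else 0) * (1 - φ (ins i am a') i)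
      - c * φ (ins i am a') i
      - (if i ∈ Tk f k (ins i am a) then (1 : ℝ) else 0)

/-- The dominant-strategy incentive to lie under policy `φ`: the largest
deterministic gain over agents, fixed reports of the others, positive-probability
true types, and reports. -/
def epsD {n : ℕ} (h f : X × Z → ℝ) (k : ℕ) (c : ℝ)
    (φ : (Fin n → X × Z) → Fin n → ℝ) : ℝ :=
  sSup {g : ℝ | ∃ (i : Fin n) (am : {j : Fin n // j ≠ i} → X × Z)
    (a : X × Z) (z' : Z), 0 < h a ∧ g = gainD f k c φ i am a (a.1, z')}

/-- in the top-`k` model, (i) every audit policy has nonnegative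
incentive to lie; (ii) the incentive to lie of UNIFORM-K is at most
`max 0 (1 - (1 + c)·min 1 (B/k))`; hence (iii) UNIFORM-K is an additive
`max 0 (1 - (1 + c)·min 1 (B/k))`-approximation of any audit policy. -/
theorem uniformK_additive_approx {n : ℕ} (hn : 1 ≤ n)
    (h f : X × Z → ℝ) (k : ℕ) (hk1 : 1 ≤ k) (hkn : k ≤ n)
    (B c : ℝ) (hB : 0 ≤ B) (hc : 0 ≤ c) (hpmf : IsPmf h) :
    (∀ φ : (Fin n → X × Z) → Fin n → ℝ, IsAuditPolicyK f k B φ →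
        0 ≤ epsK h f k c φ) ∧
      epsK h f k c (uniformK (n := n) f k B) ≤
        max 0 (1 - (1 + c) * min 1 (B / (k : ℝ))) ∧
      ∀ φ : (Fin n → X × Z) → Fin n → ℝ, IsAuditPolicyK f k B φ →
        epsK h f k c (uniformK (n := n) f k B) - epsK h f k c φ ≤
          max 0 (1 - (1 + c) * min 1 (B / (k : ℝ))) := by
  set q : ℝ := min 1 (B / (k : ℝ)) with hqdef
  set M : ℝ := max 0 (1 - (1 + c) * q) with hMdef
  have hM0 : (0 : ℝ) ≤ M := le_max_left _ _
  obtain ⟨a0, ha0⟩ : ∃ a : X × Z, 0 < h a := by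
    by_contra hcon
    push_neg at hcon
    have : ∑ a : X × Z, h a = 0 :=
      Finset.sum_eq_zero fun a _ => le_antisymm (hcon a) (hpmf.1 a)
    rw [hpmf.2] at this; norm_num at this
  have i0 : Fin n := ⟨0, hn⟩
  -- For any policy φ, 0 belongs to the gain set.
  have hzero : ∀ φ : (Fin n → X × Z) → Fin n → ℝ,
      (0 : ℝ) ∈ {g : ℝ | ∃ (i : Fin n) (a : X × Z) (z' : Z),
        0 < h a ∧ g = gainK h f k c φ i a (a.1, z')} := by
    intro φ
    refine ⟨i0, a0, a0.2, ha0, ?_⟩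
    simp [gainK]
  have hbdd : ∀ φ : (Fin n → X × Z) → Fin n → ℝ,
      BddAbove {g : ℝ | ∃ (i : Fin n) (a : X × Z) (z' : Z),
        0 < h a ∧ g = gainK h f k c φ i a (a.1, z')} := by
    intro φ
    apply Set.Finite.bddAbove
    have hsub : {g : ℝ | ∃ (i : Fin n) (a : X × Z) (z' : Z),
        0 < h a ∧ g = gainK h f k c φ i a (a.1, z')} ⊆
        Set.range (fun p : Fin n × (X × Z) × Z =>
          gainK h f k c φ p.1 p.2.1 (p.2.1.1, p.2.2)) := by
      rintro g ⟨i, a, z', _, rfl⟩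
      exact ⟨(i, a, z'), rfl⟩
    exact (Set.finite_range _).subset hsub
  have part1 : ∀ φ : (Fin n → X × Z) → Fin n → ℝ, IsAuditPolicyK f k B φ →
      0 ≤ epsK h f k c φ := fun φ _ => le_csSup (hbdd φ) (hzero φ)
  -- total probability of the other agents' profiles is 1
  have hsum1 : ∀ i : Fin n,
      ∑ am : {j : Fin n // j ≠ i} → X × Z, ∏ j, h (am j) = 1 := by
    intro i
    calc ∑ am : {j : Fin n // j ≠ i} → X × Z, ∏ j, h (am j)
        = ∑ am ∈ Fintype.piFinset
            (fun _ : {j : Fin n // j ≠ i} => (univ : Finset (X × Z))),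
            ∏ j, h (am j) := by rw [Fintype.piFinset_univ]
      _ = ∏ _j : {j : Fin n // j ≠ i}, ∑ a : X × Z, h a :=
          (Finset.prod_univ_sum _ _).symm
      _ = 1 := by simp [hpmf.2]
  have hq0 : (0 : ℝ) ≤ q := le_min zero_le_one (div_nonneg hB (Nat.cast_nonneg k))
  -- key pointwise bound for uniformK
  have key : ∀ (i : Fin n) (a : X × Z) (z' : Z),
      gainK h f k c (uniformK (n := n) f k B) i a (a.1, z') ≤ M := by
    intro i a z'
    unfold gainK
    split_ifs with hcase
    · exact hM0
    · have hterm : ∀ am : {j : Fin n // j ≠ i} → X × Z,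
          (∏ j, h (am j)) *
            ((if i ∈ Tk f k (ins i am (a.1, z')) then (1 : ℝ) else 0) *
                (1 - uniformK (n := n) f k B (ins i am (a.1, z')) i)
              - c * uniformK (n := n) f k B (ins i am (a.1, z')) i)
            ≤ (∏ j, h (am j)) * M := by
        intro am
        have hp : (0 : ℝ) ≤ ∏ j, h (am j) :=
          Finset.prod_nonneg fun j _ => hpmf.1 (am j)
        apply mul_le_mul_of_nonneg_left _ hp
        unfold uniformK
        by_cases hmem : i ∈ Tk f k (ins i am (a.1, z'))
        · simp only [hmem, if_true]
          have : 1 * (1 - q) - c * q = 1 - (1 + c) * q := by ring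
          rw [this]
          exact le_max_right _ _
        · simp only [hmem, if_false]
          simpa using hM0
      have h1 : ∑ am : {j : Fin n // j ≠ i} → X × Z,
          (∏ j, h (am j)) *
            ((if i ∈ Tk f k (ins i am (a.1, z')) then (1 : ℝ) else 0) *
                (1 - uniformK (n := n) f k B (ins i am (a.1, z')) i)
              - c * uniformK (n := n) f k B (ins i am (a.1, z')) i)
            ≤ M := by
        calc ∑ am : {j : Fin n // j ≠ i} → X × Z,
            (∏ j, h (am j)) *
              ((if i ∈ Tk f k (ins i am (a.1, z')) then (1 : ℝ) else 0) *
                  (1 - uniformK (n := n) f k B (ins i am (a.1, z')) i)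
                - c * uniformK (n := n) f k B (ins i am (a.1, z')) i)
            ≤ ∑ am : {j : Fin n // j ≠ i} → X × Z, (∏ j, h (am j)) * M :=
              Finset.sum_le_sum fun am _ => hterm am
          _ = (∑ am : {j : Fin n // j ≠ i} → X × Z, ∏ j, h (am j)) * M := by
              rw [Finset.sum_mul]
          _ = M := by rw [hsum1 i, one_mul]
      have h2 : (0 : ℝ) ≤ ∑ am : {j : Fin n // j ≠ i} → X × Z,
          (∏ j, h (am j)) * (if i ∈ Tk f k (ins i am a) then (1 : ℝ) else 0) := by
        apply Finset.sum_nonneg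
        intro am _
        have hp : (0 : ℝ) ≤ ∏ j, h (am j) :=
          Finset.prod_nonneg fun j _ => hpmf.1 (am j)
        positivity
      linarith
  have part2 : epsK h f k c (uniformK (n := n) f k B) ≤ M := by
    apply csSup_le ⟨0, hzero _⟩
    rintro g ⟨i, a, z', _, rfl⟩
    exact key i a z'
  refine ⟨part1, part2, fun φ hφ => ?_⟩
  have := part1 φ hφ
  linarith

end
end

section
/- In the top-k model, define for fixed reports A'_{−i} of the other agents the deterministic (dominant-strategy) gain g^{A'_{−i}}_φ(a, a') = 1{i ∈ T_k(A'_{−i} ∪_i {a'})}·(1 − φ_i(A'_{−i} ∪_i {a'})) − c·φ_i(A'_{−i} ∪_i {a'}) − 1{i ∈ T_k(A'_{−i} ∪_i {a})} for z' ≠ z, and g^{A'_{−i}}_φ(a, a) = 0, and let ε_DSIC(φ) be the maximum of g^{A'_{−i}}_φ(a, a') over agents i, profiles A'_{−i}, true types a = (x, z) with h(a) > 0, and reports a' = (x, z'). Assume there exists a report profile A' such that for every i ∈ T_k(A') there is a type a_i = (x_i', z_i) with h(a_i) > 0, z_i ≠ z_i', and i ∉ T_k of the profile obtained from A' by replacing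 a_i' with a_i. Then for every audit policy φ, ε_DSIC(UNIFORM-K) ≤ ε_DSIC(φ); that is, UNIFORM-K achieves ε-DSIC with the optimal ε. -/
/-!
Top-`k` allocation model: `n` agents with types in `X × Z` (`X` verifiable, `Z`
self-reported), types drawn i.i.d. from a pmf `h`, score `f`; the `k` agents
with the highest scores (ties broken by agent index) are allocated a resource.
Audit budget `B`, penalty `c` for a detected misreport.
-/

open Finset
open scoped Classical

noncomputable section

variable {X Z : Type*} [Fintype X] [Fintype Z] [Nonempty X] [Nonempty Z]

lemma card_Tk_eq {n : ℕ} (f : X × Z → ℝ) {k : ℕ} (hkn : k ≤ n)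
    (A : Fin n → X × Z) : (Tk f k A).card = k := by
  classical
  set K : Fin n → ℝ ×ₗ (Fin n) := fun i => toLex (-(f (A i)), i) with hK
  have hKinj : Function.Injective K := by
    intro i j hij
    have := congrArg (fun x => (ofLex x).2) hij
    simpa [hK] using this
  have hbeats : ∀ i j : Fin n,
      (f (A i) < f (A j) ∨ (f (A j) = f (A i) ∧ j < i)) ↔ K j < K i := by
    intro i j
    rw [hK]
    rw [Prod.Lex.lt_iff]
    constructor
    · rintro (h1 | ⟨h1, h2⟩)
      · exact Or.inl (by simpa using h1)
      · exact Or.inr ⟨by simpa using h1, h2⟩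
    · rintro (h1 | ⟨h1, h2⟩)
      · exact Or.inl (by simpa using h1)
      · exact Or.inr ⟨by simpa using h1, h2⟩
  set r : Fin n → ℕ := fun i => (univ.filter fun j => K j < K i).card with hr
  have hrmono : ∀ i i' : Fin n, K i < K i' → r i < r i' := by
    intro i i' hlt
    apply Finset.card_lt_card
    rw [Finset.ssubset_iff_of_subset]
    · exact ⟨i, by simp [hlt], by simp⟩
    · intro j hj
      simp only [Finset.mem_filter, Finset.mem_univ, true_and] at hj ⊢
      exact hj.trans hlt
  have hrinj : Function.Injective r := by
    intro i i' hri
    by_contra hne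
    rcases lt_or_gt_of_ne (fun hK' => hne (hKinj hK')) with hlt | hlt
    · exact absurd hri (Nat.ne_of_lt (hrmono _ _ hlt))
    · exact absurd hri.symm (Nat.ne_of_lt (hrmono _ _ hlt))
  have hrlt : ∀ i, r i < n := by
    intro i
    have hss : (univ.filter fun j => K j < K i) ⊂ univ := by
      rw [Finset.ssubset_univ_iff]
      intro hcon
      have : i ∈ univ.filter fun j => K j < K i := by
        rw [hcon]; exact Finset.mem_univ i
      simp at this
    have := Finset.card_lt_card hss
    simpa using this
  set R : Fin n → Fin n := fun i => ⟨r i, hrlt i⟩ with hRdef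
  have hRinj : Function.Injective R := by
    intro i i' hR
    exact hrinj (congrArg Fin.val hR)
  have hRbij : Function.Bijective R := (Finite.injective_iff_bijective).mp hRinj
  have hTk : Tk f k A = univ.filter fun i => r i < k := by
    unfold Tk
    apply Finset.filter_congr
    intro i _
    have : (univ.filter fun j =>
        f (A i) < f (A j) ∨ (f (A j) = f (A i) ∧ j < i)) =
        univ.filter fun j => K j < K i := by
      apply Finset.filter_congr
      intro j _
      exact (hbeats i j)
    rw [this]
  rw [hTk]
  have hcards : (univ.filter fun i => r i < k).card =
      (univ.filter fun v : Fin n => (v : ℕ) < k).card := by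
    apply Finset.card_bij (fun i _ => R i)
    · intro i hi
      simp only [Finset.mem_filter, Finset.mem_univ, true_and] at hi ⊢
      exact hi
    · intro i _ i' _ hR
      exact hRinj hR
    · intro v hv
      simp only [Finset.mem_filter, Finset.mem_univ, true_and] at hv
      obtain ⟨i, hi⟩ := hRbij.2 v
      refine ⟨i, ?_, hi⟩
      simp only [Finset.mem_filter, Finset.mem_univ, true_and]
      have : (R i : ℕ) = r i := rfl
      rw [hi] at this
      omega
  rw [hcards]
  have e2 : {v : Fin n // (v : ℕ) < k} ≃ Fin k :=
    { toFun := fun v => ⟨v.1.1, v.2⟩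
      invFun := fun m => ⟨⟨m.1, lt_of_lt_of_le m.2 hkn⟩, m.2⟩
      left_inv := fun v => rfl
      right_inv := fun m => rfl }
  have := Fintype.card_congr e2
  rw [Fintype.card_subtype] at this
  simpa using this

lemma gainD_le_one {n : ℕ} (f : X × Z → ℝ) (k : ℕ) (B c : ℝ) (hc : 0 ≤ c)
    (φ : (Fin n → X × Z) → Fin n → ℝ) (hφ : IsAuditPolicyK f k B φ)
    (i : Fin n) (am : {j : Fin n // j ≠ i} → X × Z) (a a' : X × Z) :
    gainD f k c φ i am a a' ≤ 1 := by
  unfold gainD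
  split_ifs with h1 h2 h3 h2 h3
  · norm_num
  all_goals {
    have h0 := (hφ (ins i am a')).1 i
    simp only [Set.mem_Icc] at h0
    nlinarith [mul_nonneg hc h0.1] }

/-- in the top-`k` model, if there is a report profile in which
every allocated agent could be a positive-probability misreporter who would lose
the resource when truthful, then UNIFORM-K achieves the optimal
dominant-strategy incentive to lie: `ε_DSIC(UNIFORM-K) ≤ ε_DSIC(φ)` for every
audit policy `φ`. -/
theorem uniformK_optimal_DSIC {n : ℕ} (hn : 1 ≤ n)
    (h f : X × Z → ℝ) (k : ℕ) (hk1 : 1 ≤ k) (hkn : k ≤ n)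
    (B c : ℝ) (hB : 0 ≤ B) (hc : 0 ≤ c) (hpmf : IsPmf h)
    (hA : ∃ A : Fin n → X × Z, ∀ i ∈ Tk f k A,
      ∃ a : X × Z, 0 < h a ∧ a.1 = (A i).1 ∧ a.2 ≠ (A i).2 ∧
        i ∉ Tk f k (Function.update A i a))
    (φ : (Fin n → X × Z) → Fin n → ℝ) (hφ : IsAuditPolicyK f k B φ) :
    epsD h f k c (uniformK (n := n) f k B) ≤ epsD h f k c φ := by
  classical
  obtain ⟨A, hAspec⟩ := hA
  have hk0 : (0 : ℝ) < k := by exact_mod_cast hk1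
  have hcard : (Tk f k A).card = k := card_Tk_eq f hkn A
  have hTne : (Tk f k A).Nonempty := Finset.card_pos.mp (by omega)
  -- the set for φ is bounded above by 1
  have hbdd : BddAbove {g : ℝ | ∃ (i : Fin n) (am : {j : Fin n // j ≠ i} → X × Z)
      (a : X × Z) (z' : Z), 0 < h a ∧ g = gainD f k c φ i am a (a.1, z')} := by
    refine ⟨1, ?_⟩
    rintro g ⟨i, am, a, z', _, rfl⟩
    exact gainD_le_one f k B c hc φ hφ i am a (a.1, z')
  -- 0 ≤ epsD φ
  have hexa : ∃ a : X × Z, 0 < h a := by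
    by_contra hno
    push_neg at hno
    have hz : ∑ a : X × Z, h a = 0 :=
      Finset.sum_eq_zero fun a _ => le_antisymm (hno a) (hpmf.1 a)
    rw [hpmf.2] at hz
    norm_num at hz
  obtain ⟨a₁, ha₁⟩ := hexa
  have h0 : 0 ≤ epsD h f k c φ := by
    have hmem : (0 : ℝ) ∈ {g : ℝ | ∃ (i : Fin n) (am : {j : Fin n // j ≠ i} → X × Z)
        (a : X × Z) (z' : Z), 0 < h a ∧ g = gainD f k c φ i am a (a.1, z')} := by
      refine ⟨⟨0, hn⟩, fun _ => Classical.arbitrary _, a₁, a₁.2, ha₁, ?_⟩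
      unfold gainD
      rw [if_pos]
      exact Prod.mk.eta.symm ▸ rfl
    exact le_csSup hbdd hmem
  -- find a cheaply-audited allocated agent
  have hex : ∃ i ∈ Tk f k A, φ A i ≤ B / k := by
    by_contra hcon
    push_neg at hcon
    have hlt : B < ∑ i ∈ Tk f k A, φ A i := by
      have h1 : ∑ i ∈ Tk f k A, B / (k : ℝ) < ∑ i ∈ Tk f k A, φ A i :=
        Finset.sum_lt_sum_of_nonempty hTne fun i hi => hcon i hi
      have h2 : ∑ i ∈ Tk f k A, B / (k : ℝ) = B := by
        rw [Finset.sum_const, hcard, nsmul_eq_mul]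
        field_simp
      linarith
    exact absurd (hφ A).2 (not_le.mpr hlt)
  obtain ⟨i₀, hi₀T, hφi₀⟩ := hex
  obtain ⟨a₀, ha₀pos, ha₀x, ha₀z, ha₀T⟩ := hAspec i₀ hi₀T
  set am₀ : {j : Fin n // j ≠ i₀} → X × Z := fun j => A j with ham₀
  have hins1 : ins i₀ am₀ (a₀.1, (A i₀).2) = A := by
    funext j
    by_cases hj : j = i₀
    · subst hj; simp [ins, ha₀x]
    · simp [ins, hj, ham₀]
  have hins2 : ins i₀ am₀ a₀ = Function.update A i₀ a₀ := by
    funext j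
    by_cases hj : j = i₀
    · subst hj; simp [ins]
    · simp [ins, hj, ham₀, Function.update, hj]
  have hne : (a₀.1, (A i₀).2) ≠ a₀ := by
    intro hco
    exact ha₀z (congrArg Prod.snd hco).symm
  have hg₀ : gainD f k c φ i₀ am₀ a₀ (a₀.1, (A i₀).2)
      = 1 - φ A i₀ - c * φ A i₀ := by
    unfold gainD
    rw [if_neg hne, hins1, hins2, if_pos hi₀T, if_neg ha₀T]
    ring
  have hg₀mem : gainD f k c φ i₀ am₀ a₀ (a₀.1, (A i₀).2) ∈
      {g : ℝ | ∃ (i : Fin n) (am : {j : Fin n // j ≠ i} → X × Z)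
        (a : X × Z) (z' : Z), 0 < h a ∧ g = gainD f k c φ i am a (a.1, z')} :=
    ⟨i₀, am₀, a₀, (A i₀).2, ha₀pos, rfl⟩
  have h1 : 1 - φ A i₀ - c * φ A i₀ ≤ epsD h f k c φ := by
    rw [← hg₀]; exact le_csSup hbdd hg₀mem
  have hφ01 := (hφ A).1 i₀
  simp only [Set.mem_Icc] at hφ01
  have hple : φ A i₀ ≤ min 1 (B / (k : ℝ)) := le_min hφ01.2 hφi₀
  have hcple : c * φ A i₀ ≤ c * min 1 (B / (k : ℝ)) :=
    mul_le_mul_of_nonneg_left hple hc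
  have key : 1 - min 1 (B / (k : ℝ)) - c * min 1 (B / (k : ℝ)) ≤ epsD h f k c φ := by
    linarith
  -- now bound every element of the uniformK set
  apply Real.sSup_le _ h0
  rintro g ⟨i, am, a, z', hapos, rfl⟩
  unfold gainD uniformK
  split_ifs with hz1 hz2 <;> simp_all <;> linarith

end
end

section
/- In the top-k model, under the UNIFORM-K policy, the dominant-strategy incentive to lie satisfies ε_DSIC(UNIFORM-K) ≤ max(0, 1 − (1 + c)·min(1, B/k)): for every agent i, every profile A'_{−i} of the other agents' reports, every true type a = (x, z) with h(a) > 0, and every report a' = (x, z'), the deterministic gain g^{A'_{−i}}_{UNIFORM-K}(a, a') is at most max(0, 1 − (1 + c)·min(1, B/k)). -/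
/-!
Top-`k` allocation model: `n` agents with types in `X × Z` (`X` verifiable, `Z`
self-reported), types drawn i.i.d. from a pmf `h`, score `f`; the `k` agents
with the highest scores (ties broken by agent index) are allocated a resource.
Audit budget `B`, penalty `c` for a detected misreport.
-/

open Finset
open scoped Classical

noncomputable section

variable {X Z : Type*} [Fintype X] [Fintype Z] [Nonempty X] [Nonempty Z]

/-- in the top-`k` model, under UNIFORM-K the dominant-strategy
incentive to lie is at most `max 0 (1 - (1 + c)·min 1 (B/k))`: every
deterministic gain of a misreport `a' = (x, z')` from a positive-probability
true type `a = (x, z)`, for any fixed reports of the others, is at most this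
bound. -/
theorem epsD_uniformK_le {n : ℕ}
    (h f : X × Z → ℝ) (k : ℕ) (hk1 : 1 ≤ k) (hkn : k ≤ n)
    (B c : ℝ) (hB : 0 ≤ B) (hc : 0 ≤ c) (hpmf : IsPmf h) :
    epsD h f k c (uniformK (n := n) f k B) ≤
        max 0 (1 - (1 + c) * min 1 (B / (k : ℝ))) ∧
      ∀ (i : Fin n) (am : {j : Fin n // j ≠ i} → X × Z)
        (a : X × Z) (z' : Z), 0 < h a →
        gainD f k c (uniformK f k B) i am a (a.1, z') ≤
          max 0 (1 - (1 + c) * min 1 (B / (k : ℝ))) := by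

  have hp0 : 0 ≤ min 1 (B / (k : ℝ)) := by
    refine le_min zero_le_one (div_nonneg hB (by positivity))
  have key : ∀ (i : Fin n) (am : {j : Fin n // j ≠ i} → X × Z)
      (a : X × Z) (z' : Z),
      gainD f k c (uniformK f k B) i am a (a.1, z') ≤
        max 0 (1 - (1 + c) * min 1 (B / (k : ℝ))) := by
    intro i am a z'
    unfold gainD uniformK
    by_cases heq : ((a.1, z') : X × Z) = a
    · simp [heq]
    · simp only [heq, if_false]
      by_cases hT : i ∈ Tk f k (ins i am (a.1, z'))
      · simp only [hT, if_true]
        have : (1 : ℝ) * (1 - min 1 (B / (k : ℝ))) - c * min 1 (B / (k : ℝ))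
            - (if i ∈ Tk f k (ins i am a) then (1 : ℝ) else 0)
            ≤ 1 - (1 + c) * min 1 (B / (k : ℝ)) := by
          have : (0:ℝ) ≤ (if i ∈ Tk f k (ins i am a) then (1 : ℝ) else 0) := by
            split <;> norm_num
          ring_nf
          nlinarith
        exact this.trans (le_max_right _ _)
      · simp only [hT, if_false]
        have : (0:ℝ) * (1 - 0) - c * 0
            - (if i ∈ Tk f k (ins i am a) then (1 : ℝ) else 0) ≤ 0 := by
          split <;> norm_num
        exact this.trans (le_max_left _ _)
  constructor
  · apply Real.sSup_le
    · rintro g ⟨i, am, a, z', _, rfl⟩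
      exact key i am a z'
    · exact le_max_left _ _
  · intro i am a z' _
    exact key i am a z'


end
end

section
/- In the top-k model, for every audit policy φ and every profile A' of n reports with T_k(A') nonempty, there exists an agent i ∈ T_k(A') with φ_i(A') ≤ min(1, B/k); consequently, if that agent has a true type a_i = (x_i', z_i) with h(a_i) > 0, z_i ≠ z_i', and i ∉ T_k of the profile obtained from A' by replacing a_i' with a_i, then its deterministic gain from the misreport satisfies g^{A'_{−i}}_φ(a_i, a_i') ≥ 1 − (1 + c)·min(1, B/k). -/
/-!
Top-`k` allocation model: `n` agents with types in `X × Z` (`X` verifiable, `Z`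
self-reported), types drawn i.i.d. from a pmf `h`, score `f`; the `k` agents
with the highest scores (ties broken by agent index) are allocated a resource.
Audit budget `B`, penalty `c` for a detected misreport.
-/

open Finset
open scoped Classical

noncomputable section

variable {X Z : Type*} [Fintype X] [Fintype Z] [Nonempty X] [Nonempty Z]

theorem k_le_card_Tk {n : ℕ} (f : X × Z → ℝ) (k : ℕ) (hkn : k ≤ n)
    (A : Fin n → X × Z) : k ≤ (Tk f k A).card := by
  classical
  set lt : Fin n → Fin n → Prop := fun j i =>
    f (A i) < f (A j) ∨ (f (A j) = f (A i) ∧ j < i) with hlt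
  set r : Fin n → ℕ := fun i => (univ.filter fun j => lt j i).card with hr
  have hirr : ∀ i, ¬ lt i i := by
    intro i h
    rcases h with h | ⟨_, h⟩
    · exact lt_irrefl _ h
    · exact lt_irrefl _ h
  have htrans : ∀ {a b c : Fin n}, lt a b → lt b c → lt a c := by
    intro a b c hab hbc
    rcases hab with h1 | ⟨h1, h1'⟩ <;> rcases hbc with h2 | ⟨h2, h2'⟩
    · exact Or.inl (h2.trans h1)
    · exact Or.inl (by linarith)
    · exact Or.inl (by linarith)
    · exact Or.inr ⟨h1.trans h2, h1'.trans h2'⟩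
  have htot : ∀ {a b : Fin n}, a ≠ b → lt a b ∨ lt b a := by
    intro a b hab
    rcases lt_trichotomy (f (A a)) (f (A b)) with h | h | h
    · exact Or.inr (Or.inl h)
    · rcases hab.lt_or_gt with h' | h'
      · exact Or.inl (Or.inr ⟨h, h'⟩)
      · exact Or.inr (Or.inr ⟨h.symm, h'⟩)
    · exact Or.inl (Or.inl h)
  have hmono : ∀ {a b : Fin n}, lt a b → r a < r b := by
    intro a b hab
    apply Finset.card_lt_card
    constructor
    · intro x hx
      simp only [mem_filter, mem_univ, true_and] at hx ⊢
      exact htrans hx hab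
    · intro hsub
      have : a ∈ univ.filter fun j => lt j a :=
        hsub (by simp only [mem_filter, mem_univ, true_and]; exact hab)
      simp only [mem_filter, mem_univ, true_and] at this
      exact hirr a this
  have hinj : Function.Injective r := by
    intro a b hab
    by_contra hne
    rcases htot hne with h | h
    · exact absurd hab (ne_of_lt (hmono h))
    · exact absurd hab.symm (ne_of_lt (hmono h))
  have hlt_n : ∀ i, r i < n := by
    intro i
    have hsub : (univ.filter fun j => lt j i) ⊆ univ.erase i := by
      intro x hx
      simp only [mem_filter, mem_univ, true_and] at hx
      refine Finset.mem_erase.mpr ⟨?_, mem_univ x⟩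
      rintro rfl; exact hirr _ hx
    calc r i ≤ (univ.erase i).card := Finset.card_le_card hsub
      _ < univ.card := Finset.card_erase_lt_of_mem (mem_univ i)
      _ = n := by simp
  set r' : Fin n → Fin n := fun i => ⟨r i, hlt_n i⟩ with hr'
  have hinj' : Function.Injective r' := fun a b hab =>
    hinj (congrArg Fin.val hab)
  have hsurj : Function.Surjective r' := Finite.surjective_of_injective hinj'
  set e : Fin n ≃ Fin n := Equiv.ofBijective r' ⟨hinj', hsurj⟩ with he
  set ι : Fin k → Fin n := fun m => e.symm ⟨m.1, lt_of_lt_of_le m.2 hkn⟩ with hι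
  have hmem : ∀ m : Fin k, ι m ∈ Tk f k A := by
    intro m
    have : r' (ι m) = ⟨m.1, lt_of_lt_of_le m.2 hkn⟩ := e.apply_symm_apply _
    have hrm : r (ι m) = m.1 := congrArg Fin.val this
    simp only [Tk, mem_filter, mem_univ, true_and]
    show (univ.filter fun j => lt j (ι m)).card < k
    rw [show (univ.filter fun j => lt j (ι m)).card = r (ι m) from rfl, hrm]
    exact m.2
  have hinjι : Function.Injective ι := fun a b hab => by
    have h2 : (⟨a.1, lt_of_lt_of_le a.2 hkn⟩ : Fin n) = ⟨b.1, lt_of_lt_of_le b.2 hkn⟩ :=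
      e.symm.injective hab
    exact Fin.ext (by simpa using congrArg Fin.val h2)
  calc k = (univ : Finset (Fin k)).card := by simp
    _ ≤ (Tk f k A).card := Finset.card_le_card_of_injOn ι
        (fun m _ => hmem m) (hinjι.injOn)

/-- in the top-`k` model, for every audit policy `φ` and profile
`A` with nonempty top-`k` set, some allocated agent `i` is audited with
probability at most `min 1 (B/k)`; consequently, if that agent has a
positive-probability true type `a` with the same verifiable part, a different
self-reported part, and `i` loses the resource when `A` is corrected to `a` in
slot `i`, then its deterministic gain from the misreport `A i` is at least
`1 - (1 + c)·min 1 (B/k)`. -/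
theorem exists_low_audit_in_topk {n : ℕ}
    (h f : X × Z → ℝ) (k : ℕ) (hk1 : 1 ≤ k) (hkn : k ≤ n)
    (B c : ℝ) (hB : 0 ≤ B) (hc : 0 ≤ c)
    (φ : (Fin n → X × Z) → Fin n → ℝ) (hφ : IsAuditPolicyK f k B φ)
    (A : Fin n → X × Z) (hT : (Tk f k A).Nonempty) :
    ∃ i ∈ Tk f k A, φ A i ≤ min 1 (B / (k : ℝ)) ∧
      ∀ a : X × Z, 0 < h a → a.1 = (A i).1 → a.2 ≠ (A i).2 →
        i ∉ Tk f k (Function.update A i a) →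
        1 - (1 + c) * min 1 (B / (k : ℝ)) ≤
          gainD f k c φ i (fun j => A j.val) a (A i) := by
  classical
  obtain ⟨i, hiT, hmin⟩ := Finset.exists_min_image (Tk f k A) (φ A) hT
  have h01 := (hφ A).1
  have hsum := (hφ A).2
  have hk0 : (0 : ℝ) < (k : ℝ) := by exact_mod_cast hk1
  have hφ0 : ∀ j, 0 ≤ φ A j := fun j => (h01 j).1
  have hcard := k_le_card_Tk f k hkn A
  have hlow : φ A i * (k : ℝ) ≤ B := by
    have h1 : ((Tk f k A).card : ℕ) • φ A i ≤ ∑ j ∈ Tk f k A, φ A j :=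
      Finset.card_nsmul_le_sum _ _ _ hmin
    have h2 : ((Tk f k A).card : ℝ) * φ A i ≤ B := by
      rw [nsmul_eq_mul] at h1; linarith
    have h3 : (k : ℝ) * φ A i ≤ ((Tk f k A).card : ℝ) * φ A i :=
      mul_le_mul_of_nonneg_right (by exact_mod_cast hcard) (hφ0 i)
    linarith
  have hφle : φ A i ≤ min 1 (B / (k : ℝ)) :=
    le_min (h01 i).2 ((le_div_iff₀ hk0).mpr hlow)
  refine ⟨i, hiT, hφle, ?_⟩
  intro a _ _ hz hnot
  have hne : A i ≠ a := fun hh => hz (by rw [hh])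
  have hins' : ins i (fun j => A j.val) (A i) = A := by
    funext j
    by_cases hj : j = i
    · subst hj; simp [ins]
    · simp [ins, hj]
  have hins : ins i (fun j => A j.val) a = Function.update A i a := by
    funext j
    by_cases hj : j = i
    · subst hj; simp [ins, Function.update]
    · simp [ins, Function.update, hj]
  unfold gainD
  rw [if_neg hne, hins, hins', if_pos hiT, if_neg hnot]
  have hmul : (1 + c) * φ A i ≤ (1 + c) * min 1 (B / (k : ℝ)) :=
    mul_le_mul_of_nonneg_left hφle (by linarith)
  linarith


end
end
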